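/- arXiv:1608.02832 — 2 statements merged into one kernel-verified Lean document; each statement's English description precedes it below -/
import Mathlib

section
/- Let f: [1, ∞) → [0, ∞) be a bounded function. Then there exists a sequence of times t_i → +∞ such that for every i, sup over t ∈ [t_i, t_i + i] of f(t) is at most 2 f(t_i). -/
/-- **Lemma 4.6 (time selection).** Let `f : [1, ∞) → [0, ∞)` be a bounded function.
Then there exists a sequence of times `t_i → +∞` such that for every `i`,
`sup_{t ∈ [t_i, t_i + i]} f(t) ≤ 2 f(t_i)`. -/
theorem time_selection (f : ℝ → ℝ)
    (hf0 : ∀ t : ℝ, 1 ≤ t → 0 ≤ f t)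
    (hbdd : ∃ M : ℝ, ∀ t : ℝ, 1 ≤ t → f t ≤ M) :
    ∃ t : ℕ → ℝ, (∀ i, 1 ≤ t i) ∧ Filter.Tendsto t Filter.atTop Filter.atTop ∧
      ∀ i : ℕ, ∀ s ∈ Set.Icc (t i) (t i + i), f s ≤ 2 * f (t i) := by
  obtain ⟨M, hM⟩ := hbdd
  have key : ∀ i : ℕ, ∃ a : ℝ, max 1 (i : ℝ) ≤ a ∧
      ∀ s ∈ Set.Icc a (a + (i : ℝ)), f s ≤ 2 * f a := by
    intro i
    by_contra h
    push_neg at h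
    -- build a doubling sequence
    have step : ∀ a : {a : ℝ // max 1 (i : ℝ) ≤ a},
        ∃ s : {a : ℝ // max 1 (i : ℝ) ≤ a}, 2 * f a.1 < f s.1 := by
      rintro ⟨a, ha⟩
      obtain ⟨s, hs, hfs⟩ := h a ha
      exact ⟨⟨s, ha.trans hs.1⟩, hfs⟩
    choose F hF using step
    set b : ℕ → {a : ℝ // max 1 (i : ℝ) ≤ a} :=
      fun n => F^[n] ⟨max 1 (i : ℝ), le_rfl⟩ with hb
    have hbsucc : ∀ n, 2 * f (b n).1 < f (b (n + 1)).1 := by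
      intro n
      have : b (n + 1) = F (b n) := by
        simp [hb, Function.iterate_succ_apply']
      rw [this]
      exact hF (b n)
    have hpos : ∀ n, 1 ≤ (b n).1 := fun n => le_trans (le_max_left _ _) (b n).2
    have hf1 : 0 < f (b 1).1 := by
      have := hbsucc 0
      have h0 : 0 ≤ f (b 0).1 := hf0 _ (hpos 0)
      nlinarith
    have growth : ∀ n : ℕ, (2 : ℝ) ^ n * f (b 1).1 ≤ f (b (n + 1)).1 := by
      intro n
      induction n with
      | zero => simp
      | succ k ih =>
        have := hbsucc (k + 1)
        have : 2 * ((2:ℝ) ^ k * f (b 1).1) ≤ f (b (k + 2)).1 := by nlinarith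
        calc (2:ℝ) ^ (k+1) * f (b 1).1 = 2 * ((2:ℝ) ^ k * f (b 1).1) := by ring
        _ ≤ f (b (k + 2)).1 := this
    obtain ⟨n, hn⟩ := pow_unbounded_of_one_lt (M / f (b 1).1) (one_lt_two (α := ℝ))
    have h1 : M < (2:ℝ) ^ n * f (b 1).1 := by
      rw [div_lt_iff₀ hf1] at hn; linarith
    have h2 : f (b (n + 1)).1 ≤ M := hM _ (hpos _)
    have := growth n
    linarith
  choose t ht1 ht2 using key
  refine ⟨t, fun i => le_trans (le_max_left _ _) (ht1 i), ?_, ht2⟩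
  exact Filter.tendsto_atTop_mono (fun i : ℕ => le_trans (le_max_right 1 (i:ℝ)) (ht1 i))
    tendsto_natCast_atTop_atTop
end

section
/- Let P ⊂ ℝ³ be a plane through the origin, with the Gaussian weight e^{−|x|²/4}. Then for all sufficiently large R > 0, ∫_{P \ B_R(0)} e^{−|x|²/4} dμ − ½ ∫_{P ∩ B_R(0)} e^{−|x|²/4} dμ < 0. Consequently, for such R the Lipschitz function φ_R which equals 1 on B_R(0), equals 0 outside B_{R+1}(0), and is linear in |x| on B_{R+1}(0) \ B_R(0), satisfies ∫_P (|∇φ_R|² − ½ φ_R²) e^{−|x|²/4} dμ < 0; in particular the plane P is not L-stable. -/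
/-!
The Gaussian weight `g(y) = exp (-‖y‖² / 4)` on `ℝ²` has finite positive total mass `C`. As
`R → ∞` its mass on `B_R` tends to `C` and its mass outside `B_R` tends to `0`, so
`∫_{|y| ≥ R} g - ½ ∫_{B_R} g → -C/2 < 0`. The cutoff `φ_R` is `1`-Lipschitz and identically
`1` on the open ball `B_R`, hence `∇φ_R = 0` there and `|∇φ_R| ≤ 1` everywhere, which bounds
its weighted energy `∫ (|∇φ_R|² - ½ φ_R²) g` by that same difference.
-/

open MeasureTheory Filter

noncomputable section

/-- Euclidean space `ℝⁿ`. -/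
abbrev Euc (n : ℕ) : Type := EuclideanSpace ℝ (Fin n)

/-- The radial cutoff `φ_R`: equal to `1` on `B_R(0)`, `0` outside `B_{R+1}(0)`,
and linear in `|x|` in between. -/
def radialCutoff (R : ℝ) (y : Euc 2) : ℝ := min 1 (max 0 (R + 1 - ‖y‖))

open Metric Set Topology
open scoped NNReal

section Gaussian

variable {V : Type*} [NormedAddCommGroup V] [InnerProductSpace ℝ V] [FiniteDimensional ℝ V]
  [MeasurableSpace V] [BorelSpace V]

theorem integrable_exp_neg_norm_sq_div_four :
    Integrable fun y : V => Real.exp (-‖y‖ ^ 2 / 4) := by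
  refine (GaussianFourier.integrable_cexp_neg_mul_sq_norm_add (V := V) (b := 1 / 4)
    (by norm_num) 0 0).re.congr (Eventually.of_forall fun y => ?_)
  simp only [zero_mul, add_zero]
  rw [show -(1 / 4 : ℂ) * (‖y‖ : ℂ) ^ 2 = ((-‖y‖ ^ 2 / 4 : ℝ) : ℂ) by push_cast; ring]
  exact Complex.exp_ofReal_re _

theorem integral_exp_neg_norm_sq_div_four_pos :
    0 < ∫ y : V, Real.exp (-‖y‖ ^ 2 / 4) := by
  rw [integral_pos_iff_support_of_nonneg (fun y => (Real.exp_pos _).le)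
    integrable_exp_neg_norm_sq_div_four,
    Function.support_eq_univ fun y => (Real.exp_pos _).ne']
  exact isOpen_univ.measure_pos volume univ_nonempty

end Gaussian

section BallExhaustion

variable {E : Type*} [SeminormedAddCommGroup E]

theorem setOf_le_norm_eq_compl_ball (R : ℝ) : {y : E | R ≤ ‖y‖} = (ball 0 R)ᶜ := by
  ext; simp

variable [MeasurableSpace E] [OpensMeasurableSpace E] {μ : Measure E} {f : E → ℝ}

theorem tendsto_setIntegral_ball_zero_atTop (hf : Integrable f μ) :
    Tendsto (fun R : ℝ => ∫ y in ball (0 : E) R, f y ∂μ) atTop (𝓝 (∫ y, f y ∂μ)) := by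
  have hU : (⋃ R : ℝ, ball (0 : E) R) = univ :=
    eq_univ_of_forall fun y => mem_iUnion.2 ⟨‖y‖ + 1, by simp⟩
  have h := tendsto_setIntegral_of_monotone (μ := μ) (f := f)
    (fun R => measurableSet_ball) (fun _ _ h => ball_subset_ball h)
    (by rw [hU]; exact hf.integrableOn)
  rwa [hU, Measure.restrict_univ] at h

theorem tendsto_setIntegral_norm_ge_atTop (hf : Integrable f μ) :
    Tendsto (fun R : ℝ => ∫ y in {y : E | R ≤ ‖y‖}, f y ∂μ) atTop (𝓝 0) := by
  simp_rw [setOf_le_norm_eq_compl_ball, setIntegral_compl measurableSet_ball hf]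
  simpa using (tendsto_setIntegral_ball_zero_atTop hf).const_sub (∫ y, f y ∂μ)

theorem eventually_setIntegral_norm_ge_sub_mul_setIntegral_ball_neg (hf : Integrable f μ)
    (hpos : 0 < ∫ y, f y ∂μ) {c : ℝ} (hc : 0 < c) :
    ∀ᶠ R in atTop, (∫ y in {y : E | R ≤ ‖y‖}, f y ∂μ) -
      c * ∫ y in ball (0 : E) R, f y ∂μ < 0 := by
  have h := (tendsto_setIntegral_norm_ge_atTop hf).sub
    ((tendsto_setIntegral_ball_zero_atTop hf).const_mul c)
  exact h.eventually (gt_mem_nhds (by nlinarith))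

end BallExhaustion

section GradientEnergy

variable {E : Type*} [NormedAddCommGroup E] [InnerProductSpace ℝ E] [CompleteSpace E]

theorem norm_gradient_le_of_lipschitzWith {f : E → ℝ} {K : ℝ≥0} (hf : LipschitzWith K f)
    (x : E) : ‖gradient f x‖ ≤ K := by
  rw [gradient, LinearIsometryEquiv.norm_map]
  exact norm_fderiv_le_of_lipschitz ℝ hf

theorem gradient_eq_zero_of_eqOn_const {f : E → ℝ} {s : Set E} {c : ℝ} (hs : IsOpen s)
    (hf : EqOn f (fun _ => c) s) {x : E} (hx : x ∈ s) : gradient f x = 0 := by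
  rw [(eventuallyEq_of_mem (hs.mem_nhds hx) hf).gradient_eq, gradient_fun_const]

variable [MeasurableSpace E] [BorelSpace E] {μ : Measure E}

theorem measurable_gradient (f : E → ℝ) : Measurable (gradient f) :=
  (InnerProductSpace.toDual ℝ E).symm.continuous.measurable.comp (measurable_fderiv ℝ f)

theorem integrable_norm_gradient_sq_sub_half_sq_mul {φ w : E → ℝ} {K : ℝ≥0} {M : ℝ}
    (hφ : LipschitzWith K φ) (hM : ∀ y, |φ y| ≤ M) (hw : Integrable w μ) :
    Integrable (fun y => (‖gradient φ y‖ ^ 2 - 1 / 2 * φ y ^ 2) * w y) μ := by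
  refine hw.bdd_mul (c := K ^ 2 + M ^ 2) ?_ (Eventually.of_forall fun y => ?_)
  · exact (((measurable_gradient φ).norm.pow_const 2).sub
      ((hφ.continuous.measurable.pow_const 2).const_mul _)).aestronglyMeasurable
  · have hgrad : ‖gradient φ y‖ ^ 2 ≤ K ^ 2 :=
      pow_le_pow_left₀ (norm_nonneg _) (norm_gradient_le_of_lipschitzWith hφ y) 2
    have hval : φ y ^ 2 ≤ M ^ 2 := sq_abs (φ y) ▸ pow_le_pow_left₀ (abs_nonneg _) (hM y) 2
    rw [Real.norm_eq_abs, abs_le]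
    constructor <;> nlinarith [sq_nonneg ‖gradient φ y‖, sq_nonneg (φ y)]

theorem integral_norm_gradient_sq_sub_half_sq_mul_le {φ w : E → ℝ} {s : Set E} (hs : IsOpen s)
    (hφ : LipschitzWith 1 φ) (hone : EqOn φ 1 s)
    (hint : Integrable (fun y => (‖gradient φ y‖ ^ 2 - 1 / 2 * φ y ^ 2) * w y) μ)
    (hw : Integrable w μ) (hw0 : 0 ≤ w) :
    ∫ y, (‖gradient φ y‖ ^ 2 - 1 / 2 * φ y ^ 2) * w y ∂μ ≤
      (∫ y in sᶜ, w y ∂μ) - 1 / 2 * ∫ y in s, w y ∂μ := by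
  have hpt : ∀ y, (‖gradient φ y‖ ^ 2 - 1 / 2 * φ y ^ 2) * w y ≤
      sᶜ.indicator w y - 1 / 2 * s.indicator w y := by
    intro y
    by_cases hy : y ∈ s
    · rw [gradient_eq_zero_of_eqOn_const hs hone hy, hone hy, indicator_of_mem hy,
        indicator_of_notMem (notMem_compl_iff.2 hy)]
      simp
    · rw [indicator_of_mem (mem_compl hy), indicator_of_notMem hy]
      have hgrad : ‖gradient φ y‖ ^ 2 ≤ 1 :=
        pow_le_one₀ (norm_nonneg _) (by simpa using norm_gradient_le_of_lipschitzWith hφ y)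
      calc (‖gradient φ y‖ ^ 2 - 1 / 2 * φ y ^ 2) * w y ≤ 1 * w y :=
            mul_le_mul_of_nonneg_right (by nlinarith [sq_nonneg (φ y)]) (hw0 y)
        _ = w y - 1 / 2 * 0 := by ring
  have hs' := hs.measurableSet
  calc ∫ y, (‖gradient φ y‖ ^ 2 - 1 / 2 * φ y ^ 2) * w y ∂μ
      ≤ ∫ y, (sᶜ.indicator w y - 1 / 2 * s.indicator w y) ∂μ :=
        integral_mono hint ((hw.indicator hs'.compl).sub ((hw.indicator hs').const_mul _)) hpt
    _ = (∫ y in sᶜ, w y ∂μ) - 1 / 2 * ∫ y in s, w y ∂μ := by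
        rw [integral_sub (hw.indicator hs'.compl) ((hw.indicator hs').const_mul _),
          integral_const_mul, integral_indicator hs'.compl, integral_indicator hs']

end GradientEnergy

theorem lipschitzWith_radialCutoff (R : ℝ) : LipschitzWith 1 (radialCutoff R) := by
  have h := (((IsometryEquiv.subLeft (R + 1)).isometry.lipschitz.const_max 0).const_min 1).comp
    (lipschitzWith_one_norm (E := Euc 2))
  rw [mul_one] at h
  exact h

theorem abs_radialCutoff_le_one (R : ℝ) (y : Euc 2) : |radialCutoff R y| ≤ 1 :=
  abs_le.2 ⟨(neg_nonpos.2 zero_le_one).trans (le_min zero_le_one (le_max_left _ _)),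
    min_le_left _ _⟩

theorem eqOn_radialCutoff_ball (R : ℝ) : EqOn (radialCutoff R) 1 (ball 0 R) := fun y hy => by
  have : 1 ≤ R + 1 - ‖y‖ := by linarith [mem_ball_zero_iff.1 hy]
  simp [radialCutoff, le_max_of_le_right this]

theorem hasCompactSupport_radialCutoff (R : ℝ) : HasCompactSupport (radialCutoff R) := by
  refine HasCompactSupport.intro (isCompact_closedBall 0 (R + 1)) fun y hy => ?_
  have : R + 1 - ‖y‖ ≤ 0 := by linarith [mem_closedBall_zero_iff.not.1 hy]
  simp [radialCutoff, this]

theorem integral_norm_gradient_radialCutoff_sq_sub_half_sq_mul_le (R : ℝ) :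
    ∫ y : Euc 2, (‖gradient (radialCutoff R) y‖ ^ 2 - 1 / 2 * radialCutoff R y ^ 2) *
        Real.exp (-‖y‖ ^ 2 / 4) ≤
      (∫ y in {y : Euc 2 | R ≤ ‖y‖}, Real.exp (-‖y‖ ^ 2 / 4)) -
        1 / 2 * ∫ y in ball (0 : Euc 2) R, Real.exp (-‖y‖ ^ 2 / 4) := by
  rw [setOf_le_norm_eq_compl_ball]
  exact integral_norm_gradient_sq_sub_half_sq_mul_le isOpen_ball (lipschitzWith_radialCutoff R)
    (eqOn_radialCutoff_ball R)
    (integrable_norm_gradient_sq_sub_half_sq_mul (lipschitzWith_radialCutoff R)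
      (abs_radialCutoff_le_one R) integrable_exp_neg_norm_sq_div_four)
    integrable_exp_neg_norm_sq_div_four fun y => (Real.exp_pos _).le

/-- **The plane is not L-stable (final step of Section 4.4).**  Let `P ⊆ ℝ³` be a plane
through the origin (identified with `ℝ²` via an isometry), with Gaussian weight
`e^{-|x|²/4}`.  For all sufficiently large `R > 0`,
`∫_{P \ B_R} e^{-|x|²/4} - ½ ∫_{P ∩ B_R} e^{-|x|²/4} < 0`; consequently, for such `R`
the cutoff `φ_R` satisfies `∫_P (|∇φ_R|² - ½ φ_R²) e^{-|x|²/4} < 0`, and in particular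
the plane `P` is not L-stable. -/
theorem plane_is_not_L_stable :
    (∀ᶠ R in atTop,
      (∫ y in {y : Euc 2 | R ≤ ‖y‖}, Real.exp (-‖y‖ ^ 2 / 4)) -
          (1 / 2) * ∫ y in Metric.ball (0 : Euc 2) R, Real.exp (-‖y‖ ^ 2 / 4) < 0 ∧
      (∫ y : Euc 2, (‖gradient (radialCutoff R) y‖ ^ 2 -
          (1 / 2) * (radialCutoff R y) ^ 2) * Real.exp (-‖y‖ ^ 2 / 4)) < 0) ∧
    ¬ (∀ φ : Euc 2 → ℝ, (∃ L : NNReal, LipschitzWith L φ) → HasCompactSupport φ →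
        0 ≤ ∫ y : Euc 2, (‖gradient φ y‖ ^ 2 - (1 / 2) * (φ y) ^ 2) *
          Real.exp (-‖y‖ ^ 2 / 4)) := by
  have hR := (eventually_setIntegral_norm_ge_sub_mul_setIntegral_ball_neg
    integrable_exp_neg_norm_sq_div_four integral_exp_neg_norm_sq_div_four_pos one_half_pos).mono
    fun R hR => And.intro hR
      ((integral_norm_gradient_radialCutoff_sq_sub_half_sq_mul_le R).trans_lt hR)
  refine ⟨hR, fun hstable => ?_⟩
  obtain ⟨R, -, hneg⟩ := hR.exists
  exact hneg.not_ge
    (hstable _ ⟨1, lipschitzWith_radialCutoff R⟩ (hasCompactSupport_radialCutoff R))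
end
end
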